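/- For probability measures P ≪ Q on a finite space, KL(P‖Q) = sup_f { E_P[f] − log E_Q[e^f] }, where the supremum is over all real-valued functions f (Donsker–Varadhan representation). -/

import Mathlib

/-!
Upper bound: with the Gibbs tilt `y = Q e^f / E_Q[e^f]`, the gap `E_P[f] - log E_Q[e^f] - KL(P‖Q)`
equals `∑ P log (y / P)`, which is at most `∑ (y - P) = 0` by `log x ≤ x - 1`.
Lower bound: `f = log (P / Q)` attains the supremum when `P` has full support; in general take
`f = log (P / Q)` on the support of `P` and `f = -t` off it, whose value
`KL(P‖Q) - log (1 + e^{-t} Q{P = 0})` tends to `KL(P‖Q)` as `t → ∞`.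
-/

/-- Kullback–Leibler divergence between pmfs `P` and `Q` on a finite space. -/
noncomputable def KLdiv {Ω : Type*} [Fintype Ω] (P Q : Ω → ℝ) : ℝ :=
  ∑ ω, P ω * Real.log (P ω / Q ω)

open Real Finset Filter Topology

lemma Real.mul_log_div_le_sub {p y : ℝ} (hp : 0 ≤ p) (hy : 0 ≤ y) (hpy : y = 0 → p = 0) :
    p * log (y / p) ≤ y - p := by
  rcases hp.eq_or_lt with rfl | hp
  · simpa using hy
  have hy : 0 < y := hy.lt_of_ne fun h => hp.ne' (hpy h.symm)
  calc p * log (y / p) ≤ p * (y / p - 1) := by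
        gcongr; exact log_le_sub_one_of_pos (by positivity)
    _ = y - p := by field_simp

section DonskerVaradhan

variable {Ω : Type*} [Fintype Ω] (P Q : Ω → ℝ)

noncomputable def dvFunctional (f : Ω → ℝ) : ℝ :=
  (∑ ω, P ω * f ω) - log (∑ ω, Q ω * exp (f ω))

noncomputable def truncatedLogRatio (t : ℝ) (ω : Ω) : ℝ :=
  if P ω = 0 then -t else log (P ω / Q ω)

variable {P Q}

lemma sum_mul_exp_pos (hPsum : ∑ ω, P ω = 1) (hQ : ∀ ω, 0 ≤ Q ω)
    (hac : ∀ ω, Q ω = 0 → P ω = 0) (f : Ω → ℝ) : 0 < ∑ ω, Q ω * exp (f ω) := by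
  obtain ⟨ω₀, -, hPω₀⟩ := exists_ne_zero_of_sum_ne_zero (hPsum.trans_ne one_ne_zero)
  have hQω₀ : 0 < Q ω₀ := (hQ ω₀).lt_of_ne fun h => hPω₀ (hac ω₀ h.symm)
  exact sum_pos' (fun ω _ => mul_nonneg (hQ ω) (exp_pos _).le)
    ⟨ω₀, mem_univ _, mul_pos hQω₀ (exp_pos _)⟩

lemma dvFunctional_le_KLdiv (hP : ∀ ω, 0 ≤ P ω) (hPsum : ∑ ω, P ω = 1) (hQ : ∀ ω, 0 ≤ Q ω)
    (hac : ∀ ω, Q ω = 0 → P ω = 0) (f : Ω → ℝ) : dvFunctional P Q f ≤ KLdiv P Q := by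
  set S := ∑ ω, Q ω * exp (f ω)
  have hS : 0 < S := sum_mul_exp_pos hPsum hQ hac f
  set y : Ω → ℝ := fun ω => Q ω * exp (f ω) / S
  have hgap : ∀ ω, P ω * (f ω - log S - log (P ω / Q ω)) = P ω * log (y ω / P ω) := by
    intro ω
    rcases (hP ω).eq_or_lt with hPω | hPω
    · simp [← hPω]
    have hQω : 0 < Q ω := (hQ ω).lt_of_ne fun h => hPω.ne' (hac ω h.symm)
    rw [log_div (by positivity) hPω.ne', log_div (by positivity) hS.ne',
      log_mul hQω.ne' (exp_pos _).ne', log_exp, log_div hPω.ne' hQω.ne']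
    ring
  have hy : ∀ ω, 0 ≤ y ω := fun ω => div_nonneg (mul_nonneg (hQ ω) (exp_pos _).le) hS.le
  have hyP : ∀ ω, y ω = 0 → P ω = 0 := fun ω h => hac ω <| by
    simpa [y, hS.ne', (exp_pos _).ne'] using h
  suffices dvFunctional P Q f - KLdiv P Q ≤ 0 by linarith
  calc dvFunctional P Q f - KLdiv P Q = ∑ ω, P ω * (f ω - log S - log (P ω / Q ω)) := by
        simp only [dvFunctional, KLdiv, mul_sub, sum_sub_distrib, ← sum_mul, hPsum, one_mul, S]
    _ = ∑ ω, P ω * log (y ω / P ω) := sum_congr rfl fun ω _ => hgap ω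
    _ ≤ ∑ ω, (y ω - P ω) := sum_le_sum fun ω _ => mul_log_div_le_sub (hP ω) (hy ω) (hyP ω)
    _ = 0 := by rw [sum_sub_distrib, ← sum_div, div_self hS.ne', hPsum, sub_self]

lemma sum_mul_truncatedLogRatio (t : ℝ) : ∑ ω, P ω * truncatedLogRatio P Q t ω = KLdiv P Q :=
  sum_congr rfl fun ω _ => by by_cases h : P ω = 0 <;> simp [truncatedLogRatio, h]

lemma sum_mul_exp_truncatedLogRatio (hP : ∀ ω, 0 ≤ P ω) (hPsum : ∑ ω, P ω = 1)
    (hQ : ∀ ω, 0 ≤ Q ω) (hac : ∀ ω, Q ω = 0 → P ω = 0) (t : ℝ) :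
    ∑ ω, Q ω * exp (truncatedLogRatio P Q t ω) = 1 + exp (-t) * ∑ ω with P ω = 0, Q ω := by
  rw [sum_filter, mul_sum, ← hPsum, ← sum_add_distrib]
  refine sum_congr rfl fun ω _ => ?_
  by_cases h : P ω = 0
  · simp [truncatedLogRatio, h, mul_comm]
  have hQω : Q ω ≠ 0 := fun hQω => h (hac ω hQω)
  simp [truncatedLogRatio, h, exp_log (div_pos ((hP ω).lt_of_ne' h) ((hQ ω).lt_of_ne' hQω)),
    mul_div_cancel₀ _ hQω]

lemma tendsto_dvFunctional_truncatedLogRatio (hP : ∀ ω, 0 ≤ P ω) (hPsum : ∑ ω, P ω = 1)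
    (hQ : ∀ ω, 0 ≤ Q ω) (hac : ∀ ω, Q ω = 0 → P ω = 0) :
    Tendsto (fun t => dvFunctional P Q (truncatedLogRatio P Q t)) atTop (𝓝 (KLdiv P Q)) := by
  simp only [dvFunctional, sum_mul_truncatedLogRatio, sum_mul_exp_truncatedLogRatio hP hPsum hQ hac]
  have hlog := ((tendsto_exp_neg_atTop_nhds_zero.mul_const (∑ ω with P ω = 0, Q ω)).const_add 1).log
    (by simp)
  simpa using hlog.const_sub (KLdiv P Q)

end DonskerVaradhan

theorem donsker_varadhan_general {Ω : Type*} [Fintype Ω] (P Q : Ω → ℝ)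
    (hP : ∀ ω, 0 ≤ P ω) (hPsum : ∑ ω, P ω = 1)
    (hQ : ∀ ω, 0 ≤ Q ω)
    (hac : ∀ ω, Q ω = 0 → P ω = 0) :
    KLdiv P Q =
      ⨆ f : Ω → ℝ, ((∑ ω, P ω * f ω) - Real.log (∑ ω, Q ω * Real.exp (f ω))) := by
  have hle := dvFunctional_le_KLdiv hP hPsum hQ hac
  have hbdd : BddAbove (Set.range (dvFunctional P Q)) := ⟨_, Set.forall_mem_range.2 hle⟩
  exact le_antisymm
    (le_of_tendsto' (tendsto_dvFunctional_truncatedLogRatio hP hPsum hQ hac) fun t =>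
      le_ciSup hbdd _)
    (ciSup_le hle)

/-- **Donsker–Varadhan representation.** For probability measures `P ≪ Q` on a
finite space, `KL(P‖Q) = sup_f { E_P[f] − log E_Q[e^f] }`, the supremum ranging
over all real-valued functions `f`. -/
theorem donsker_varadhan {Ω : Type*} [Fintype Ω] (P Q : Ω → ℝ)
    (hP : ∀ ω, 0 ≤ P ω) (hPsum : ∑ ω, P ω = 1)
    (hQ : ∀ ω, 0 ≤ Q ω) (hQsum : ∑ ω, Q ω = 1)
    (hac : ∀ ω, Q ω = 0 → P ω = 0) :
    KLdiv P Q =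
      ⨆ f : Ω → ℝ, ((∑ ω, P ω * f ω) - Real.log (∑ ω, Q ω * Real.exp (f ω))) :=
  donsker_varadhan_general P Q hP hPsum hQ hac
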